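/- Let X_1,...,X_n be random variables with range [0,b] such that |E[X_t | X_1,...,X_{t-1}] - μ| ≤ C for all t, where 0 < C < μ. Let S_n = X_1 + ... + X_n. Then for all a ≥ 0, P(S_n ≤ n(μ-C) - a) ≤ exp(-2(a/b)²/n). -/

import Mathlib

open MeasureTheory Real

/-! Conditionally on the past, each `X t` lies in `[0, b]` with mean at least `μ - C`. Since
`exp (λ y)` lies below its chord on `[0, b]`, the conditional moment generating function of `X t`
is at most that of a Bernoulli variable, and Hoeffding's lemma bounds it at `λ ≤ 0` by
`exp (λ (μ - C) + λ² b² / 8)`. Peeling off one variable at a time bounds the moment generating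
function of the sum by the `n`-th power of this, and the Chernoff bound with
`λ = -4a / (n b²)` gives the claim. -/

open ProbabilityTheory in
/-- Hoeffding's lemma for a Bernoulli(`p`) variable, i.e. for the law `(1 - p) δ₀ + p δ₁`. -/
lemma one_sub_add_mul_exp_le {p : ℝ} (hp0 : 0 ≤ p) (hp1 : p ≤ 1) (u : ℝ) :
    1 - p + p * exp u ≤ exp (p * u + u ^ 2 / 8) := by
  set ν : Measure ℝ :=
    ENNReal.ofReal (1 - p) • Measure.dirac 0 + ENNReal.ofReal p • Measure.dirac 1
  have : IsProbabilityMeasure ν := ⟨by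
    simp [ν, ← ENNReal.ofReal_add (by linarith : 0 ≤ 1 - p) hp0]⟩
  have hν (f : ℝ → ℝ) : ∫ x, f x ∂ν = (1 - p) * f 0 + p * f 1 := by
    rw [integral_add_measure ((integrable_dirac enorm_lt_top).smul_measure ENNReal.ofReal_ne_top)
      ((integrable_dirac enorm_lt_top).smul_measure ENNReal.ofReal_ne_top), integral_smul_measure,
      integral_smul_measure, integral_dirac, integral_dirac, ENNReal.toReal_ofReal (by linarith),
      ENNReal.toReal_ofReal hp0, smul_eq_mul, smul_eq_mul]
  have hrange : ∀ᵐ x ∂ν, id x ∈ Set.Icc (0 : ℝ) 1 :=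
    ae_add_measure_iff.2 ⟨Measure.ae_smul_measure (by simp) _, Measure.ae_smul_measure (by simp) _⟩
  have hmgf : (1 - p) * exp (-(u * p)) + p * exp (u * (1 - p)) ≤ exp (u ^ 2 / 8) := by
    convert (hasSubgaussianMGF_of_mem_Icc aemeasurable_id hrange).mgf_le u using 1
    · simp [mgf, hν]
    · norm_num; ring
  have hcancel : exp (u * p) * exp (-(u * p)) = 1 := by rw [← exp_add]; simp
  have hshift : exp (u * p) * exp (u * (1 - p)) = exp u := by rw [← exp_add]; ring_nf
  calc 1 - p + p * exp u
      = exp (u * p) * ((1 - p) * exp (-(u * p)) + p * exp (u * (1 - p))) := by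
        linear_combination (p - 1) * hcancel - p * hshift
    _ ≤ exp (u * p) * exp (u ^ 2 / 8) := by gcongr
    _ = exp (p * u + u ^ 2 / 8) := by rw [← exp_add]; ring_nf

lemma exp_mul_le_chord {b y : ℝ} (hb : 0 < b) (hy : y ∈ Set.Icc 0 b) (t : ℝ) :
    exp (t * y) ≤ 1 - y / b + y / b * exp (t * b) := by
  have hyb : y / b ≤ 1 := (div_le_one hb).2 hy.2
  have := convexOn_exp.2 (Set.mem_univ 0) (Set.mem_univ (t * b)) (by linarith : 0 ≤ 1 - y / b)
    (div_nonneg hy.1 hb.le) (by ring)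
  simp only [smul_eq_mul, mul_zero, zero_add, exp_zero, mul_one] at this
  rwa [div_mul_comm, mul_div_cancel_right₀ _ hb.ne'] at this

lemma integrable_exp_mul_of_nonpos {Ω : Type*} [MeasurableSpace Ω] {μ : Measure Ω}
    [IsFiniteMeasure μ] {f : Ω → ℝ} (hf : Measurable f) (hf0 : ∀ ω, 0 ≤ f ω) {t : ℝ}
    (ht : t ≤ 0) : Integrable (fun ω ↦ exp (t * f ω)) μ :=
  .of_mem_Icc 0 1 (by fun_prop) (ae_of_all _ fun ω ↦
    ⟨(exp_pos _).le, exp_le_one_iff.2 (mul_nonpos_of_nonpos_of_nonneg ht (hf0 ω))⟩)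

section Conditional

variable {Ω : Type*} {m m₀ : MeasurableSpace Ω} {μ : Measure Ω} [IsFiniteMeasure μ]

lemma condExp_exp_mul_le (hm : m ≤ m₀) {Y : Ω → ℝ} (hY : AEMeasurable Y μ) {b : ℝ} (hb : 0 < b)
    (hr : ∀ᵐ ω ∂μ, Y ω ∈ Set.Icc 0 b) (t : ℝ) :
    μ[fun ω ↦ exp (t * Y ω) | m] ≤ᵐ[μ] fun ω ↦ exp (t * μ[Y | m] ω + t ^ 2 * b ^ 2 / 8) := by
  have hYint : Integrable Y μ := .of_mem_Icc 0 b hY hr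
  set c := (exp (t * b) - 1) / b
  have hchord : (fun ω ↦ exp (t * Y ω)) ≤ᵐ[μ] (fun _ ↦ 1) + c • Y := by
    filter_upwards [hr] with ω hω
    convert exp_mul_le_chord hb hω t using 1
    simp only [Pi.add_apply, Pi.smul_apply, smul_eq_mul, c]
    field_simp
    ring
  have hlin : μ[(fun _ ↦ (1 : ℝ)) + c • Y | m] =ᵐ[μ] (fun _ ↦ 1) + c • μ[Y | m] := by
    filter_upwards [condExp_add (integrable_const 1) (hYint.smul c) m, condExp_smul c Y m]
      with ω hadd hsmul
    rw [hadd, Pi.add_apply, condExp_const hm, Pi.add_apply, hsmul]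
  have hnonneg : 0 ≤ᵐ[μ] μ[Y | m] := condExp_nonneg (hr.mono fun _ h ↦ h.1)
  have hle : μ[Y | m] ≤ᵐ[μ] fun _ ↦ b := by
    have := condExp_mono (m := m) hYint (integrable_const b) (hr.mono fun _ h ↦ h.2)
    rwa [condExp_const hm] at this
  filter_upwards [condExp_mono (m := m) (ProbabilityTheory.integrable_exp_mul_of_mem_Icc hY hr)
    ((integrable_const 1).add (hYint.smul c)) hchord, hlin, hnonneg, hle]
    with ω hmono hlin hnonneg hle
  set M := μ[Y | m] ω
  have hp0 : 0 ≤ M / b := div_nonneg hnonneg hb.le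
  have hp1 : M / b ≤ 1 := (div_le_one hb).2 hle
  calc μ[fun ω ↦ exp (t * Y ω) | m] ω ≤ 1 + c * M := by
        simpa [hlin] using hmono
    _ = 1 - M / b + M / b * exp (t * b) := by simp only [c]; field_simp; ring
    _ ≤ exp (M / b * (t * b) + (t * b) ^ 2 / 8) := one_sub_add_mul_exp_le hp0 hp1 _
    _ = exp (t * M + t ^ 2 * b ^ 2 / 8) := by congr 1; field_simp

lemma integral_mul_le_of_condExp_le (hm : m ≤ m₀) {G Z : Ω → ℝ} {K : ℝ}
    (hG : StronglyMeasurable[m] G) (hG0 : 0 ≤ᵐ[μ] G) (hGint : Integrable G μ)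
    (hZint : Integrable Z μ) (hGZint : Integrable (G * Z) μ) (hZ : μ[Z | m] ≤ᵐ[μ] fun _ ↦ K) :
    ∫ ω, G ω * Z ω ∂μ ≤ (∫ ω, G ω ∂μ) * K := by
  have hpull : μ[G * Z | m] =ᵐ[μ] G * μ[Z | m] :=
    condExp_mul_of_stronglyMeasurable_left hG hGZint hZint
  calc ∫ ω, G ω * Z ω ∂μ = ∫ ω, (G * μ[Z | m]) ω ∂μ :=
        (integral_condExp hm).symm.trans (integral_congr_ae hpull)
    _ ≤ ∫ ω, G ω * K ∂μ := by
        refine integral_mono_ae (integrable_condExp.congr hpull) (hGint.mul_const K) ?_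
        filter_upwards [hZ, hG0] with ω hZω hGω
        exact mul_le_mul_of_nonneg_left hZω hGω
    _ = (∫ ω, G ω ∂μ) * K := integral_mul_const K G

end Conditional

section PartialSums

variable {Ω : Type*} {n : ℕ} (X : Fin n → Ω → ℝ)

abbrev pastSigma (k : ℕ) : MeasurableSpace Ω :=
  ⨆ i : {i : Fin n // (i : ℕ) < k}, MeasurableSpace.comap (X i.1) inferInstance

def partialSum (k : ℕ) (ω : Ω) : ℝ := ∑ t : Fin n with t.val < k, X t ω

@[simp]
lemma partialSum_zero : partialSum X 0 = 0 := by
  ext ω; simp [partialSum]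

lemma partialSum_succ {k : ℕ} (hk : k < n) (ω : Ω) :
    partialSum X (k + 1) ω = partialSum X k ω + X ⟨k, hk⟩ ω := by
  have hinsert : Finset.univ.filter (fun t : Fin n ↦ t.val < k + 1) =
      insert ⟨k, hk⟩ (Finset.univ.filter fun t : Fin n ↦ t.val < k) := by
    ext t; simp [Fin.ext_iff]; omega
  rw [partialSum, hinsert, Finset.sum_insert (by simp), add_comm, partialSum]

lemma partialSum_self : partialSum X n = fun ω ↦ ∑ t, X t ω := by
  ext ω; simp [partialSum]

variable {X}

lemma pastSigma_le [m₀ : MeasurableSpace Ω] (hmeas : ∀ t, Measurable (X t)) (k : ℕ) :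
    pastSigma X k ≤ m₀ :=
  iSup_le fun i ↦ (hmeas i.1).comap_le

lemma measurable_partialSum_pastSigma (k : ℕ) : Measurable[pastSigma X k] (partialSum X k) :=
  Finset.measurable_fun_sum _ fun t ht ↦ Measurable.of_comap_le
    (le_iSup (fun i : {i : Fin n // (i : ℕ) < k} ↦ MeasurableSpace.comap (X i.1) inferInstance)
      ⟨t, (Finset.mem_filter.1 ht).2⟩)

lemma measurable_partialSum [MeasurableSpace Ω] (hmeas : ∀ t, Measurable (X t)) (k : ℕ) :
    Measurable (partialSum X k) :=
  (measurable_partialSum_pastSigma k).mono (pastSigma_le hmeas k) le_rfl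

lemma partialSum_nonneg (hX : ∀ t ω, 0 ≤ X t ω) (k : ℕ) (ω : Ω) : 0 ≤ partialSum X k ω :=
  Finset.sum_nonneg fun t _ ↦ hX t ω

end PartialSums

section Azuma

variable {Ω : Type*} [MeasurableSpace Ω] {μ : Measure Ω} [IsProbabilityMeasure μ] {n : ℕ}
  {X : Fin n → Ω → ℝ} {b ν t : ℝ}

lemma integral_exp_mul_partialSum_le (hb : 0 < b) (hmeas : ∀ i, Measurable (X i))
    (hrange : ∀ i ω, X i ω ∈ Set.Icc 0 b)
    (hcond : ∀ i : Fin n, ∀ᵐ ω ∂μ, ν ≤ μ[X i | pastSigma X i] ω)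
    (ht : t ≤ 0) {k : ℕ} (hk : k ≤ n) :
    ∫ ω, exp (t * partialSum X k ω) ∂μ ≤ exp (k * (t * ν + t ^ 2 * b ^ 2 / 8)) := by
  induction k with
  | zero => simp
  | succ k ih =>
    have hkn : k < n := hk
    set i : Fin n := ⟨k, hkn⟩
    have hX0 : ∀ j ω, 0 ≤ X j ω := fun j ω ↦ (hrange j ω).1
    have hstep : μ[fun ω ↦ exp (t * X i ω) | pastSigma X k] ≤ᵐ[μ]
        fun _ ↦ exp (t * ν + t ^ 2 * b ^ 2 / 8) := by
      filter_upwards [condExp_exp_mul_le (pastSigma_le hmeas k) (hmeas i).aemeasurable hb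
        (ae_of_all _ (hrange i)) t, hcond i] with ω hexp hmean
      exact hexp.trans (exp_le_exp.2 (by nlinarith))
    have hprod : (fun ω ↦ exp (t * partialSum X k ω)) * (fun ω ↦ exp (t * X i ω)) =
        fun ω ↦ exp (t * partialSum X (k + 1) ω) := by
      ext ω; simp [partialSum_succ X hkn, mul_add, exp_add, i]
    calc ∫ ω, exp (t * partialSum X (k + 1) ω) ∂μ
        = ∫ ω, exp (t * partialSum X k ω) * exp (t * X i ω) ∂μ := by rw [← hprod]; rfl
      _ ≤ (∫ ω, exp (t * partialSum X k ω) ∂μ) * exp (t * ν + t ^ 2 * b ^ 2 / 8) := by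
          refine integral_mul_le_of_condExp_le (pastSigma_le hmeas k)
            ((measurable_partialSum_pastSigma k).const_mul t).exp.stronglyMeasurable
            (ae_of_all _ fun _ ↦ (exp_pos _).le)
            (integrable_exp_mul_of_nonpos (measurable_partialSum hmeas k)
              (partialSum_nonneg hX0 k) ht)
            (integrable_exp_mul_of_nonpos (hmeas i) (hX0 i) ht) ?_ hstep
          rw [hprod]
          exact integrable_exp_mul_of_nonpos (measurable_partialSum hmeas _)
            (partialSum_nonneg hX0 _) ht
      _ ≤ exp (k * (t * ν + t ^ 2 * b ^ 2 / 8)) * exp (t * ν + t ^ 2 * b ^ 2 / 8) := by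
          gcongr
          exact ih hkn.le
      _ = exp ((k + 1 : ℕ) * (t * ν + t ^ 2 * b ^ 2 / 8)) := by
          rw [← exp_add]; push_cast; ring_nf

end Azuma

theorem generalized_chernoff_hoeffding_lower_general
    {Ω : Type*} [MeasurableSpace Ω] (ℙ : Measure Ω) [IsProbabilityMeasure ℙ]
    (n : ℕ) (X : Fin n → Ω → ℝ) (b μ C : ℝ)
    (hb : 0 < b)
    (hmeas : ∀ t, Measurable (X t))
    (hrange : ∀ t ω, X t ω ∈ Set.Icc (0 : ℝ) b)
    (hcond : ∀ t : Fin n, ∀ᵐ ω ∂ℙ,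
      |(ℙ[X t | ⨆ i : {i : Fin n // (i : ℕ) < (t : ℕ)},
          MeasurableSpace.comap (X i.1) inferInstance]) ω - μ| ≤ C)
    (a : ℝ) (ha : 0 ≤ a) :
    (ℙ {ω | ∑ t, X t ω ≤ (n : ℝ) * (μ - C) - a}).toReal ≤
      Real.exp (-2 * (a / b)^2 / n) := by
  set t := -(4 * a / (n * b ^ 2))
  have ht : t ≤ 0 := neg_nonpos.2 (by positivity)
  have hlower (i : Fin n) : ∀ᵐ ω ∂ℙ, μ - C ≤ ℙ[X i | pastSigma X i] ω :=
    (hcond i).mono fun ω h ↦ by linarith [(abs_le.1 h).1]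
  have hmgf : ProbabilityTheory.mgf (fun ω ↦ ∑ i, X i ω) ℙ t ≤
      exp (n * (t * (μ - C) + t ^ 2 * b ^ 2 / 8)) := by
    simpa [ProbabilityTheory.mgf, partialSum_self] using
      integral_exp_mul_partialSum_le hb hmeas hrange hlower ht le_rfl
  have hint : Integrable (fun ω ↦ exp (t * ∑ i, X i ω)) ℙ :=
    integrable_exp_mul_of_nonpos (Finset.measurable_fun_sum _ fun i _ ↦ hmeas i)
      (fun ω ↦ Finset.sum_nonneg fun i _ ↦ (hrange i ω).1) ht
  have hexponent : -t * (n * (μ - C) - a) + n * (t * (μ - C) + t ^ 2 * b ^ 2 / 8) =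
      -2 * (a / b) ^ 2 / n := by
    rcases eq_or_ne (n : ℝ) 0 with hn | hn
    · simp [t, hn]
    · simp only [t]; field_simp; ring
  calc (ℙ {ω | ∑ i, X i ω ≤ n * (μ - C) - a}).toReal
      ≤ exp (-t * (n * (μ - C) - a)) * ProbabilityTheory.mgf (fun ω ↦ ∑ i, X i ω) ℙ t :=
        ProbabilityTheory.measure_le_le_exp_mul_mgf _ ht hint
    _ ≤ exp (-t * (n * (μ - C) - a)) * exp (n * (t * (μ - C) + t ^ 2 * b ^ 2 / 8)) := by
        gcongr
    _ = exp (-2 * (a / b) ^ 2 / n) := by rw [← exp_add, hexponent]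

/-- Generalized Chernoff-Hoeffding bound (lower tail) for random variables
whose conditional means may drift within `C` of `μ`. -/
theorem generalized_chernoff_hoeffding_lower
    {Ω : Type*} [MeasurableSpace Ω] (ℙ : Measure Ω) [IsProbabilityMeasure ℙ]
    (n : ℕ) (X : Fin n → Ω → ℝ) (b μ C : ℝ)
    (hb : 0 < b) (hC : 0 < C) (hCμ : C < μ)
    (hmeas : ∀ t, Measurable (X t))
    (hrange : ∀ t ω, X t ω ∈ Set.Icc (0 : ℝ) b)
    (hcond : ∀ t : Fin n, ∀ᵐ ω ∂ℙ,
      |(ℙ[X t | ⨆ i : {i : Fin n // (i : ℕ) < (t : ℕ)},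
          MeasurableSpace.comap (X i.1) inferInstance]) ω - μ| ≤ C)
    (a : ℝ) (ha : 0 ≤ a) :
    (ℙ {ω | ∑ t, X t ω ≤ (n : ℝ) * (μ - C) - a}).toReal ≤
      Real.exp (-2 * (a / b)^2 / n) :=
  generalized_chernoff_hoeffding_lower_general ℙ n X b μ C hb hmeas hrange hcond a ha
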